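/- arXiv:1310.5792 — 5 statements merged into one kernel-verified Lean document; each statement's English description precedes it below -/
import Mathlib

section
/- The poset ℙ is countably closed: for every sequence (pᵢ)_{i∈ℕ} of elements of ℙ with p_{i+1} ≤ pᵢ for all i, there exists q ∈ ℙ with q ≤ pᵢ for all i. -/
/-- Baire space: the set of functions `ℕ → ℕ`. -/
abbrev Baire : Type := ℕ → ℕ

/-- `ω₂* = ω₂ ∪ {∞}`, with `none` playing the role of `∞`. -/
abbrev OStar : Type 1 := Option Ordinal

/-- The relation `<` on `ω₂*`, extending the ordinal order by `x < ∞` for every `x`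
(including `∞ < ∞`). -/
def ltStar : OStar → OStar → Prop
  | _, none => True
  | none, some _ => False
  | some a, some b => a < b

/-- `ω₂`, the second uncountable initial ordinal. -/
noncomputable def omega2 : Ordinal := (Cardinal.aleph 2).ord

/-- A tag belongs to `ω₂* = ω₂ ∪ {∞}`: if it is an ordinal, it is below `ω₂`. -/
def InO2Star (x : OStar) : Prop := ∀ β : Ordinal, x = some β → β < omega2

/-- Partial maps from `R^{<ω}` to `ω₂* × ω₂*` (conditions are such partial maps). -/
abbrev PC : Type 1 := List Baire →. (OStar × OStar)

/-- Membership in the forcing `ℙ`: `p` is a partial map from `R^{<ω}` to `ω₂* × ω₂*`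
such that (i) its domain is a countable subtree of `R^{<ω}` containing `⟨⟩`, with
`p(⟨⟩) = (∞, ∞)` and all tags in `ω₂*`; (ii) for nonempty `σ` in the domain, the second tag
is unchanged from `σ⁻` to `σ` when `|σ|` is odd, and the first tag is unchanged when `|σ|`
is even; and (iii) whenever `σ⌢⟨a,b⟩` is in the domain with `|σ|` even, if `p(σ)₀ ≠ ∞` and
`p(σ⌢⟨a,b⟩)₀ < p(σ)₀` then `p(σ⌢⟨a,b⟩)₁ < p(σ)₁`. -/
def InP (p : PC) : Prop :=
  p.Dom.Countable ∧
  (∀ σ ∈ p.Dom, ∀ τ : List Baire, τ <+: σ → τ ∈ p.Dom) ∧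
  (((none, none) : OStar × OStar) ∈ p ([] : List Baire)) ∧
  (∀ σ ∈ p.Dom, ∀ x ∈ p σ, InO2Star x.1 ∧ InO2Star x.2) ∧
  (∀ σ : List Baire, σ ∈ p.Dom → σ ≠ [] → ∀ x ∈ p σ, ∀ y ∈ p σ.dropLast,
      (Odd σ.length → y.2 = x.2) ∧ (Even σ.length → y.1 = x.1)) ∧
  (∀ (σ : List Baire) (a b : Baire), σ ++ [a, b] ∈ p.Dom → Even σ.length →
      ∀ x ∈ p σ, ∀ y ∈ p (σ ++ [a, b]), x.1 ≠ none → ltStar y.1 x.1 → ltStar y.2 x.2)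

/-- The order on `ℙ` (reverse inclusion): `p ≤ q` iff `p` extends `q` as a partial function. -/
def Ple (p q : PC) : Prop := ∀ σ : List Baire, ∀ y ∈ q σ, y ∈ p σ

/-- `x ≥ α` in `ω₂*`: `x` is `∞` or an ordinal `≥ α`. -/
def GeStar (x : OStar) (α : Ordinal) : Prop :=
  x = none ∨ ∃ β : Ordinal, x = some β ∧ α ≤ β

/-- The coordinatewise retagging condition: tags `< α` are preserved exactly, and tags
`≥ α` (including `∞`) remain `≥ α`. -/
def RetagAt (α : Ordinal) (x y : OStar) : Prop :=
  (∀ β : Ordinal, x = some β → β < α → y = some β) ∧ (GeStar x α → GeStar y α)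

/-- `q` is an `α`-retagging of `p` (written `p ≈_α q`): same domain, and at every point of
the domain each coordinate satisfies the retagging condition. -/
def Retag (α : Ordinal) (p q : PC) : Prop :=
  p.Dom = q.Dom ∧
  ∀ σ : List Baire, σ ∈ p.Dom → ∀ x ∈ p σ, ∀ y ∈ q σ,
    RetagAt α x.1 y.1 ∧ RetagAt α x.2 y.2

/-- The coordinatewise `α`-projection on `ω₂*`: ordinals `< α` are kept, everything else is
sent to `∞`. -/
noncomputable def projO (α : Ordinal) : OStar → OStar
  | none => none
  | some β => if β < α then some β else none

/-- The `α`-projection `p^α` of a condition `p`: same domain, tags projected by `projO α`. -/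
noncomputable def projP (α : Ordinal) (p : PC) : PC :=
  fun σ => (p σ).map (fun x => (projO α x.1, projO α x.2))

/-- Membership in the subposet `ℙ_α`: conditions all of whose tags are either ordinals `< α`
or `∞`. -/
def InPa (α : Ordinal) (p : PC) : Prop :=
  InP p ∧ ∀ σ ∈ p.Dom, ∀ x ∈ p σ,
    (∀ β : Ordinal, x.1 = some β → β < α) ∧ (∀ β : Ordinal, x.2 = some β → β < α)

/-- The poset `ℙ` is countably closed: every decreasing `ω`-sequence of conditions has a
common extension in `ℙ`. -/
theorem P_countably_closed (p : ℕ → PC) (hmem : ∀ i, InP (p i))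
    (hdec : ∀ i, Ple (p (i + 1)) (p i)) :
    ∃ q : PC, InP q ∧ ∀ i, Ple q (p i) := by
  classical
  have mono : ∀ i j, i ≤ j → ∀ σ (y : OStar × OStar), y ∈ p i σ → y ∈ p j σ := by
    intro i j hij
    induction j, hij using Nat.le_induction with
    | base => exact fun σ y h => h
    | succ n hn ih => exact fun σ y h => hdec n σ y (ih σ y h)
  have uniq : ∀ i j σ (y z : OStar × OStar), y ∈ p i σ → z ∈ p j σ → y = z := by
    intro i j σ y z hy hz
    exact Part.mem_unique (mono i (max i j) (le_max_left _ _) σ y hy)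
      (mono j (max i j) (le_max_right _ _) σ z hz)
  set q : PC := fun σ =>
    ⟨∃ i, (p i σ).Dom, fun h => (p (Classical.choose h) σ).get (Classical.choose_spec h)⟩
    with hqdef
  have hmemq : ∀ σ (y : OStar × OStar), y ∈ q σ ↔ ∃ i, y ∈ p i σ := by
    intro σ y
    constructor
    · rintro ⟨h, rfl⟩
      exact ⟨Classical.choose h, Part.get_mem _⟩
    · rintro ⟨i, hy⟩
      have hd : ∃ j, (p j σ).Dom := ⟨i, hy.fst⟩
      refine ⟨hd, ?_⟩
      exact (uniq (Classical.choose hd) i σ _ y (Part.get_mem _) hy)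
  have hdomq : ∀ σ, σ ∈ q.Dom ↔ ∃ i, σ ∈ (p i).Dom := by
    intro σ
    simp only [PFun.mem_dom, hmemq]
    exact ⟨fun ⟨y, i, h⟩ => ⟨i, y, h⟩, fun ⟨i, y, h⟩ => ⟨y, i, h⟩⟩
  refine ⟨q, ⟨?_, ?_, ?_, ?_, ?_, ?_⟩, ?_⟩
  · -- countable
    have : q.Dom = ⋃ i, (p i).Dom := by
      ext σ; simp only [Set.mem_iUnion]; exact hdomq σ
    rw [this]
    exact Set.countable_iUnion fun i => (hmem i).1
  · -- subtree
    intro σ hσ τ hτ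
    obtain ⟨i, hi⟩ := (hdomq σ).1 hσ
    exact (hdomq τ).2 ⟨i, (hmem i).2.1 σ hi τ hτ⟩
  · -- root
    exact (hmemq _ _).2 ⟨0, (hmem 0).2.2.1⟩
  · -- tags in ω₂*
    intro σ hσ x hx
    obtain ⟨i, hi⟩ := (hmemq σ x).1 hx
    exact (hmem i).2.2.2.1 σ ((PFun.mem_dom _ _).2 ⟨x, hi⟩) x hi
  · -- parity condition
    intro σ hσ hne x hx y hy
    obtain ⟨i, hi⟩ := (hmemq σ x).1 hx
    obtain ⟨j, hj⟩ := (hmemq _ y).1 hy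
    have hi' := mono i (max i j) (le_max_left _ _) σ x hi
    have hj' := mono j (max i j) (le_max_right _ _) _ y hj
    exact (hmem (max i j)).2.2.2.2.1 σ ((PFun.mem_dom _ _).2 ⟨x, hi'⟩) hne x hi' y hj'
  · -- condition (iii)
    intro σ a b hdom heven x hx y hy h1 h2
    obtain ⟨i, hi⟩ := (hmemq σ x).1 hx
    obtain ⟨j, hj⟩ := (hmemq _ y).1 hy
    have hi' := mono i (max i j) (le_max_left _ _) σ x hi
    have hj' := mono j (max i j) (le_max_right _ _) _ y hj
    exact (hmem (max i j)).2.2.2.2.2 σ a b ((PFun.mem_dom _ _).2 ⟨y, hj'⟩) heven x hi' y hj' h1 h2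
  · -- q ≤ p i
    intro i σ y hy
    exact (hmemq σ y).2 ⟨i, hy⟩
end

section
/- (Projecting Lemma, part 5) For every ordinal α < ω₂, the poset ℙ_α is countably closed: for every sequence (pᵢ)_{i∈ℕ} of elements of ℙ_α with p_{i+1} ≤ pᵢ for all i, there exists q ∈ ℙ_α with q ≤ pᵢ for all i. -/
/-- (Projecting Lemma, part 5) For every `α < ω₂`, the poset `ℙ_α` is countably closed:
every decreasing `ω`-sequence of conditions in `ℙ_α` has a common extension in `ℙ_α`. -/
theorem Pa_countably_closed (α : Ordinal) (hα : α < omega2) (p : ℕ → PC)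
    (hmem : ∀ i, InPa α (p i)) (hdec : ∀ i, Ple (p (i + 1)) (p i)) :
    ∃ q : PC, InPa α q ∧ ∀ i, Ple q (p i) := by
  classical
  -- the chain is decreasing in the extension order
  have hchain : ∀ i j, i ≤ j → Ple (p j) (p i) := by
    intro i j h
    induction j, h using Nat.le_induction with
    | base => intro σ y hy; exact hy
    | succ n hn ih => intro σ y hy; exact hdec n σ y (ih σ y hy)
  have hcons : ∀ i j (σ : List Baire) (y z : OStar × OStar),
      y ∈ p i σ → z ∈ p j σ → y = z := by
    intro i j σ y z hy hz
    rcases le_total i j with h | h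
    · exact Part.mem_unique (hchain i j h σ y hy) hz
    · exact Part.mem_unique hy (hchain j i h σ z hz)
  -- the union of the chain
  set q : PC := fun σ =>
    ⟨∃ i, (p i σ).Dom, fun h => (p (Nat.find h) σ).get (Nat.find_spec h)⟩ with hqdef
  have hmemq : ∀ (σ : List Baire) (y : OStar × OStar), y ∈ q σ ↔ ∃ i, y ∈ p i σ := by
    intro σ y
    constructor
    · rintro ⟨h, rfl⟩
      exact ⟨Nat.find h, Part.get_mem _⟩
    · rintro ⟨i, hy⟩
      have hdq : (q σ).Dom := ⟨i, Part.dom_iff_mem.mpr ⟨_, hy⟩⟩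
      refine ⟨hdq, ?_⟩
      exact (hcons _ _ σ _ y (Part.get_mem _) hy)
  have hdomq : ∀ σ : List Baire, σ ∈ q.Dom ↔ ∃ i, σ ∈ (p i).Dom := by
    intro σ; exact Iff.rfl
  have hPle : ∀ i, Ple q (p i) := by
    intro i σ y hy; exact (hmemq σ y).2 ⟨i, hy⟩
  refine ⟨q, ⟨⟨?_, ?_, ?_, ?_, ?_, ?_⟩, ?_⟩, hPle⟩
  · -- countable domain
    have : q.Dom = ⋃ i, (p i).Dom := by
      ext σ; simp only [Set.mem_iUnion]; exact hdomq σ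
    rw [this]
    exact Set.countable_iUnion fun i => (hmem i).1.1
  · -- subtree
    intro σ hσ τ hτ
    obtain ⟨i, hi⟩ := (hdomq σ).1 hσ
    exact (hdomq τ).2 ⟨i, (hmem i).1.2.1 σ hi τ hτ⟩
  · -- root
    exact (hmemq _ _).2 ⟨0, (hmem 0).1.2.2.1⟩
  · -- tags in ω₂*
    intro σ hσ x hx
    obtain ⟨i, hi⟩ := (hmemq σ x).1 hx
    exact (hmem i).1.2.2.2.1 σ (Part.dom_iff_mem.mpr ⟨_, hi⟩) x hi
  · -- condition (ii)
    intro σ hσ hne x hx y hy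
    obtain ⟨i, hi⟩ := (hmemq σ x).1 hx
    obtain ⟨j, hj⟩ := (hmemq _ y).1 hy
    have hik : x ∈ p (max i j) σ := hchain i (max i j) (le_max_left i j) σ x hi
    have hjk : y ∈ p (max i j) σ.dropLast := hchain j (max i j) (le_max_right i j) _ y hj
    exact (hmem (max i j)).1.2.2.2.2.1 σ (Part.dom_iff_mem.mpr ⟨_, hik⟩) hne x hik y hjk
  · -- condition (iii)
    intro σ a b hab heven x hx y hy
    obtain ⟨i, hi⟩ := (hmemq σ x).1 hx
    obtain ⟨j, hj⟩ := (hmemq _ y).1 hy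
    have hik : x ∈ p (max i j) σ := hchain i (max i j) (le_max_left i j) σ x hi
    have hjk : y ∈ p (max i j) (σ ++ [a, b]) :=
      hchain j (max i j) (le_max_right i j) _ y hj
    exact (hmem (max i j)).1.2.2.2.2.2 σ a b (Part.dom_iff_mem.mpr ⟨_, hjk⟩) heven x hik y hjk
  · -- tags below α
    intro σ hσ x hx
    obtain ⟨i, hi⟩ := (hmemq σ x).1 hx
    exact (hmem i).2 σ (Part.dom_iff_mem.mpr ⟨_, hi⟩) x hi
end

section
/- (Local well-foundedness of conditions) Let r ∈ ℙ and let σ ∈ dom(r). Then the tree T_σ = {τ ∈ R^{<ω} : σ⌢τ ∈ dom(r), and for every proper initial segment ρ of τ such that σ⌢ρ is nonempty of odd length, r((σ⌢ρ)⁻)₀ ≠ ∞ and r(σ⌢ρ)₀ < r((σ⌢ρ)⁻)₀} is well-founded: there is no infinite sequence f of elements of R all of whose finite initial segments lie in T_σ. -/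
lemma getD_lt_getD_of_ltStar {x y : OStar} (hy : y ≠ none) (h : ltStar x y) :
    x.getD 0 < y.getD 0 := by
  cases y with
  | none => exact absurd rfl hy
  | some b =>
    cases x with
    | none => exact h.elim
    | some a => exact h

theorem false_of_ltStar_at_odd_of_eq_at_even (t : ℕ → OStar) (m : ℕ)
    (hodd : ∀ n, Odd (m + n + 1) → t n ≠ none ∧ ltStar (t (n + 1)) (t n))
    (heven : ∀ n, Even (m + n + 1) → t (n + 1) = t n) : False := by
  have hdrop : ∀ n, Odd (m + n + 1) → (t (n + 1)).getD 0 < (t n).getD 0 := fun n hn =>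
    getD_lt_getD_of_ltStar (hodd n hn).1 (hodd n hn).2
  have hstep : ∀ n, (t (n + 2)).getD 0 < (t n).getD 0 := by
    intro n
    rcases Nat.even_or_odd (m + n + 1) with hn | hn
    · rw [← heven n hn]
      exact hdrop (n + 1) (by rw [← add_assoc]; exact hn.add_one)
    · rw [heven (n + 1) (by rw [← add_assoc]; exact hn.add_one)]
      exact hdrop n hn
  exact not_strictAnti_of_wellFoundedLT (fun k => (t (2 * k)).getD 0)
    (strictAnti_nat_of_succ_lt fun k => hstep (2 * k))

lemma ofFn_succ_eq_append {α : Type*} (f : ℕ → α) (n : ℕ) :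
    List.ofFn (fun i : Fin (n + 1) => f i) = List.ofFn (fun i : Fin n => f i) ++ [f n] := by
  rw [List.ofFn_succ']
  simp [List.concat_eq_append]

theorem local_wellfoundedness_general (r : PC) (hr : InP r) (σ : List Baire) :
    ¬ ∃ f : ℕ → Baire, ∀ n : ℕ,
        σ ++ List.ofFn (fun i : Fin n => f i) ∈ r.Dom ∧
        ∀ ρ : List Baire, ρ <+: List.ofFn (fun i : Fin n => f i) →
          ρ ≠ List.ofFn (fun i : Fin n => f i) → σ ++ ρ ≠ [] → Odd (σ ++ ρ).length →
          ∀ x ∈ r (σ ++ ρ), ∀ y ∈ r ((σ ++ ρ).dropLast),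
            y.1 ≠ none ∧ ltStar x.1 y.1 := by
  rintro ⟨f, hf⟩
  let branch : ℕ → List Baire := fun n => σ ++ List.ofFn (fun i : Fin n => f i)
  have hdropLast : ∀ n, (branch (n + 1)).dropLast = branch n := fun n => by
    simp only [branch, ofFn_succ_eq_append f n, ← List.append_assoc, List.dropLast_concat]
  have hne : ∀ n, branch (n + 1) ≠ [] := fun n => by simp [branch]
  have hlength : ∀ n, (branch (n + 1)).length = σ.length + n + 1 := fun n => by
    simp [branch, add_assoc]
  let tag : ℕ → OStar × OStar := fun n => (r (branch n)).get (hf n).1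
  have htag : ∀ n, tag n ∈ r (branch n) := fun n => Part.get_mem _
  have htag_dropLast : ∀ n, tag n ∈ r (branch (n + 1)).dropLast := fun n => by
    rw [hdropLast]; exact htag n
  refine false_of_ltStar_at_odd_of_eq_at_even (fun n => (tag n).1) σ.length
    (fun n hn => ?_) (fun n hn => ?_)
  · have hprefix : List.ofFn (fun i : Fin (n + 1) => f i) <+:
        List.ofFn (fun i : Fin (n + 2) => f i) := by
      rw [ofFn_succ_eq_append f (n + 1)]; exact List.prefix_append _ _
    have hproper : List.ofFn (fun i : Fin (n + 1) => f i) ≠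
        List.ofFn (fun i : Fin (n + 2) => f i) := fun h => by
      simpa using congrArg List.length h
    exact (hf (n + 2)).2 _ hprefix hproper (hne n) (by rw [hlength]; exact hn)
      _ (htag (n + 1)) _ (htag_dropLast n)
  · obtain ⟨-, -, -, -, hparity, -⟩ := hr
    exact ((hparity _ (hf (n + 1)).1 (hne n) _ (htag (n + 1)) _ (htag_dropLast n)).2
      (by rw [hlength]; exact hn)).symm

/-- (Local well-foundedness of conditions) For `r ∈ ℙ` and `σ ∈ dom(r)`, the tree
`T_σ = {τ : σ⌢τ ∈ dom(r)` and along `τ` player Open never restarts according to `r}` is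
well-founded: it has no infinite path. -/
theorem local_wellfoundedness (r : PC) (hr : InP r) (σ : List Baire) (hσ : σ ∈ r.Dom) :
    ¬ ∃ f : ℕ → Baire, ∀ n : ℕ,
        σ ++ List.ofFn (fun i : Fin n => f i) ∈ r.Dom ∧
        ∀ ρ : List Baire, ρ <+: List.ofFn (fun i : Fin n => f i) →
          ρ ≠ List.ofFn (fun i : Fin n => f i) → σ ++ ρ ≠ [] → Odd (σ ++ ρ).length →
          ∀ x ∈ r (σ ++ ρ), ∀ y ∈ r ((σ ++ ρ).dropLast),
            y.1 ≠ none ∧ ltStar x.1 y.1 :=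
  local_wellfoundedness_general r hr σ
end

section
/- (Continuous selection) Let F : R → ℕ be continuous, and suppose that for every a ∈ R there exists b ∈ R with F(⟨a,b⟩) = 1. Then there exists a continuous function g : R → R such that F(⟨a, g(a)⟩) = 1 for every a ∈ R. -/
private lemma baire_modulus (F : (ℕ → ℕ) → ℕ) (hF : Continuous F) (x : ℕ → ℕ) :
    ∃ k, ∀ y, (∀ i < k, y i = x i) → F y = F x := by
  have hU : IsOpen (F ⁻¹' {F x}) := hF.isOpen_preimage _ (isOpen_discrete _)
  rw [isOpen_pi_iff] at hU
  obtain ⟨I, u, hIu, hsub⟩ := hU x rfl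
  refine ⟨I.sup id + 1, fun y hy => ?_⟩
  have hmem : y ∈ (I : Set ℕ).pi u := by
    intro i hi
    rw [hy i (Nat.lt_succ_of_le (Finset.le_sup (f := id) hi))]
    exact (hIu i hi).2
  exact hsub hmem

/-- (Continuous selection) Let `pair : ℕ × ℕ → ℕ` be a bijection, and for `a b : ℕ → ℕ`
write `⟨a,b⟩` for the element `n ↦ pair (a n, b n)` of Baire space. If `F : R → ℕ` is
continuous (Baire space `R = ℕ → ℕ` carrying the product topology, `ℕ` discrete) and for
every `a ∈ R` there is `b ∈ R` with `F⟨a,b⟩ = 1`, then there is a continuous `g : R → R`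
with `F⟨a, g a⟩ = 1` for every `a`. -/
theorem continuous_selection (pair : ℕ × ℕ → ℕ) (hpair : Function.Bijective pair)
    (F : (ℕ → ℕ) → ℕ) (hF : Continuous F)
    (hsel : ∀ a : ℕ → ℕ, ∃ b : ℕ → ℕ, F (fun n => pair (a n, b n)) = 1) :
    ∃ g : (ℕ → ℕ) → (ℕ → ℕ), Continuous g ∧
      ∀ a : ℕ → ℕ, F (fun n => pair (a n, g a n)) = 1 := by
  classical
  set D : ℕ → List ℕ := fun m => ((Encodable.decode m : Option (List ℕ)).getD []) with hD
  set P : (ℕ → ℕ) → ℕ → Prop := fun a m =>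
    ∀ a' : ℕ → ℕ, (∀ i < (D m).length, a' i = a i) →
      F (fun n => pair (a' n, (D m).getD n 0)) = 1 with hP
  have hex : ∀ a, ∃ m, P a m := by
    intro a
    obtain ⟨b, hb⟩ := hsel a
    obtain ⟨k, hk⟩ := baire_modulus F hF (fun n => pair (a n, b n))
    refine ⟨Encodable.encode (List.ofFn (fun i : Fin k => b i)), ?_⟩
    have hDe : D (Encodable.encode (List.ofFn fun i : Fin k => b i)) =
        List.ofFn (fun i : Fin k => b i) := by
      simp [hD, Encodable.encodek]
    intro a' ha'
    rw [hDe] at ha' ⊢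
    have key : F (fun n => pair (a' n, (List.ofFn fun i : Fin k => b i).getD n 0)) =
        F (fun n => pair (a n, b n)) := by
      apply hk
      intro i hi
      have h1 : a' i = a i := ha' i (by simpa using hi)
      have h2 : (List.ofFn fun i : Fin k => b i).getD i 0 = b i := by
        simp [List.getD_eq_getElem?_getD, List.getElem?_ofFn, List.ofFnNthVal, hi]
      rw [h1, h2]
    rw [key]; exact hb
  set μ : (ℕ → ℕ) → ℕ := fun a => Nat.find (hex a) with hμdef
  refine ⟨fun a n => (D (μ a)).getD n 0, ?_, ?_⟩
  · apply IsLocallyConstant.continuous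
    rw [IsLocallyConstant.iff_exists_open]
    intro a
    set N := (Finset.range (μ a + 1)).sup (fun m => (D m).length) with hN
    refine ⟨{a' | ∀ i < N, a' i = a i}, ?_, fun i _ => rfl, ?_⟩
    · have heq : {a' : ℕ → ℕ | ∀ i < N, a' i = a i} =
          ⋂ i ∈ Finset.range N, {a' : ℕ → ℕ | a' i = a i} := by
        ext a'; simp [Finset.mem_range]
      rw [heq]
      refine isOpen_biInter_finset (fun i _ => ?_)
      have : {a' : ℕ → ℕ | a' i = a i} = (fun a' : ℕ → ℕ => a' i) ⁻¹' {a i} := rfl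
      rw [this]
      exact IsOpen.preimage (continuous_apply i) (isOpen_discrete _)
    · intro a' ha'
      have hPiff : ∀ m ≤ μ a, (P a' m ↔ P a m) := by
        intro m hm
        have hlen : (D m).length ≤ N := by
          apply Finset.le_sup (f := fun m => (D m).length)
          simpa [Finset.mem_range] using Nat.lt_succ_of_le hm
        have hag : ∀ i < (D m).length, a' i = a i :=
          fun i hi => ha' i (lt_of_lt_of_le hi hlen)
        constructor
        · intro h a'' ha''; exact h a'' (fun i hi => (ha'' i hi).trans (hag i hi).symm)
        · intro h a'' ha''; exact h a'' (fun i hi => (ha'' i hi).trans (hag i hi))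
      have hμeq : μ a' = μ a := by
        have h1 : P a' (μ a) := (hPiff _ le_rfl).2 (Nat.find_spec (hex a))
        have h2 : μ a' ≤ μ a := Nat.find_min' _ h1
        have h3 : μ a ≤ μ a' := by
          by_contra h
          push_neg at h
          exact Nat.find_min (hex a) h ((hPiff _ (le_of_lt h)).1 (Nat.find_spec (hex a')))
        omega
      funext n
      rw [hμeq]
  · intro a
    exact Nat.find_spec (hex a) a (fun i _ => rfl)
end

section
/- There is no continuous function F : R → ℕ such that the relation ≺ on R defined by a ≺ b iff F(⟨a,b⟩) = 1 is a strict well-ordering of R, i.e., a transitive, trichotomous, well-founded relation on all of R. -/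
/-- There is no continuous `F : R → ℕ` (Baire space `R = ℕ → ℕ` with the product topology,
`ℕ` discrete) such that the relation `a ≺ b ↔ F⟨a,b⟩ = 1` (where `⟨a,b⟩ = n ↦ pair (a n, b n)`
for a fixed bijection `pair : ℕ × ℕ → ℕ`) is a strict well-ordering of `R`, i.e. a transitive,
trichotomous, well-founded relation on all of `R`. -/
theorem no_continuous_wellordering (pair : ℕ × ℕ → ℕ) (hpair : Function.Bijective pair) :
    ¬ ∃ F : (ℕ → ℕ) → ℕ, Continuous F ∧
        Transitive (fun a b : ℕ → ℕ => F (fun n => pair (a n, b n)) = 1) ∧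
        (∀ a b : ℕ → ℕ,
          F (fun n => pair (a n, b n)) = 1 ∨ a = b ∨ F (fun n => pair (b n, a n)) = 1) ∧
        WellFounded (fun a b : ℕ → ℕ => F (fun n => pair (a n, b n)) = 1) := by
  rintro ⟨F, hF, htrans, htri, hwf⟩
  -- irreflexivity
  have hirr : ∀ a : ℕ → ℕ, F (fun n => pair (a n, a n)) ≠ 1 := fun a => hwf.isIrrefl.irrefl a
  -- the two "graph" sets are closed
  have hcont : ∀ (f : ((ℕ → ℕ) × (ℕ → ℕ)) → (ℕ → ℕ) × (ℕ → ℕ)), Continuous f →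
      IsClosed {p : (ℕ → ℕ) × (ℕ → ℕ) | F (fun n => pair ((f p).1 n, (f p).2 n)) = 1} := by
    intro f hf
    have h1 : Continuous fun p : (ℕ → ℕ) × (ℕ → ℕ) =>
        F (fun n => pair ((f p).1 n, (f p).2 n)) := by
      refine hF.comp (continuous_pi fun n => ?_)
      exact (continuous_of_discreteTopology (f := pair)).comp
        (((continuous_apply n).comp (continuous_fst.comp hf)).prodMk
          ((continuous_apply n).comp (continuous_snd.comp hf)))
    exact isClosed_singleton.preimage h1
  have hS1 : IsClosed {p : (ℕ → ℕ) × (ℕ → ℕ) | F (fun n => pair (p.1 n, p.2 n)) = 1} :=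
    hcont id continuous_id
  have hS2 : IsClosed {p : (ℕ → ℕ) × (ℕ → ℕ) | F (fun n => pair (p.2 n, p.1 n)) = 1} := by
    have := hcont (fun p => (p.2, p.1)) (continuous_snd.prodMk continuous_fst)
    simpa using this
  -- the diagonal is the complement of the union, hence open
  have hdiag : IsOpen {p : (ℕ → ℕ) × (ℕ → ℕ) | p.1 = p.2} := by
    have : {p : (ℕ → ℕ) × (ℕ → ℕ) | p.1 = p.2} =
        ({p : (ℕ → ℕ) × (ℕ → ℕ) | F (fun n => pair (p.1 n, p.2 n)) = 1} ∪
         {p : (ℕ → ℕ) × (ℕ → ℕ) | F (fun n => pair (p.2 n, p.1 n)) = 1})ᶜ := by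
      ext ⟨a, b⟩
      simp only [Set.mem_setOf_eq, Set.mem_compl_iff, Set.mem_union, not_or]
      constructor
      · rintro rfl
        exact ⟨hirr a, hirr a⟩
      · rintro ⟨h1, h2⟩
        rcases htri a b with h | h | h
        · exact absurd h h1
        · exact h
        · exact absurd h h2
    rw [this]
    exact (hS1.union hS2).isOpen_compl
  -- extract an isolated point
  obtain ⟨U, V, hU, hV, hxU, hxV, hUV⟩ :=
    isOpen_prod_iff.1 hdiag (fun _ => 0) (fun _ => 0) rfl
  have hVsing : ∀ b ∈ V, b = (fun _ => 0 : ℕ → ℕ) := fun b hb =>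
    (hUV (Set.mk_mem_prod hxU hb)).symm
  -- but Baire space has no isolated points
  obtain ⟨I, u, hu, hpi⟩ := isOpen_pi_iff.1 hV _ hxV
  obtain ⟨m, hm⟩ := I.exists_nat_subset_range
  set y : ℕ → ℕ := fun n => if n = m then 1 else 0 with hy
  have hyV : y ∈ V := by
    apply hpi
    intro i hi
    have him : i ≠ m := by
      intro h
      subst h
      exact absurd (hm hi) (by simp)
    simpa [hy, him] using (hu i hi).2
  have := congrFun (hVsing y hyV) m
  simp [hy] at this
end
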